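/- arXiv:1510.02143 — 3 statements merged into one kernel-verified Lean document; each statement's English description precedes it below -/
import Mathlib

section
/- Let K be a field, n a natural number, and X an invertible n×n matrix over K. Then for every k with 0 ≤ k ≤ n, the product of the constant coefficient of the characteristic polynomial of X with the coefficient of λ^(n−k) in the characteristic polynomial of X⁻¹ equals the coefficient of λ^k in the characteristic polynomial of X; that is, (charpoly X).coeff 0 * (charpoly X⁻¹).coeff (n − k) = (charpoly X).coeff k. -/
open Polynomial Matrix

theorem charpoly_inv_coeff (K : Type*) [Field K] (n : ℕ)
    (X : Matrix (Fin n) (Fin n) K) (hX : IsUnit X) :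
    ∀ k : ℕ, k ≤ n →
      X.charpoly.coeff 0 * (X⁻¹).charpoly.coeff (n - k) = X.charpoly.coeff k := by
  intro k hk
  have hdet : IsUnit X.det := (Matrix.isUnit_iff_isUnit_det X).mp hX
  have hinv : X * X⁻¹ = 1 := Matrix.mul_nonsing_inv X hdet
  set Xc : Matrix (Fin n) (Fin n) K[X] := (C : K →+* K[X]).mapMatrix X with hXc
  have hmul : Xc * (C : K →+* K[X]).mapMatrix (X⁻¹) = 1 := by
    rw [hXc, ← RingHom.map_mul, hinv, RingHom.map_one]
  have key : (Polynomial.C X.det) * (X⁻¹).charpoly = (-1 : K[X]) ^ n * X.charpolyRev := by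
    have hdetXc : Polynomial.C X.det = Xc.det := RingHom.map_det C X
    rw [hdetXc, Matrix.charpoly, charmatrix, ← Matrix.det_mul, mul_sub, hmul]
    have hsc : Xc * Matrix.scalar (Fin n) (Polynomial.X : K[X]) =
        (Polynomial.X : K[X]) • Xc := by
      rw [Matrix.scalar_apply, ← Matrix.smul_one_eq_diagonal, Matrix.mul_smul, mul_one]
    rw [hsc, Matrix.charpolyRev]
    rw [show (Polynomial.X : K[X]) • Xc - 1 = -(1 - (Polynomial.X : K[X]) • X.map C) by
      rw [neg_sub]; rfl]
    rw [Matrix.det_neg, Fintype.card_fin]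
  have hcoeff := congrArg (fun p => Polynomial.coeff p (n - k)) key
  simp only [Polynomial.coeff_C_mul] at hcoeff
  have hrev : X.charpolyRev.coeff (n - k) = X.charpoly.coeff k := by
    rw [← Matrix.reverse_charpoly, Polynomial.coeff_reverse,
      Matrix.charpoly_natDegree_eq_dim, Fintype.card_fin,
      Polynomial.revAt_le (Nat.sub_le n k), Nat.sub_sub_self hk]
  have hc0 : X.charpoly.coeff 0 = (-1 : K) ^ n * X.det := by
    have := Matrix.det_eq_sign_charpoly_coeff X
    rw [Fintype.card_fin] at this
    rw [this, ← mul_assoc, ← mul_pow]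
    simp
  rw [hc0, mul_assoc, hcoeff]
  have : ((-1 : K[X]) ^ n * X.charpolyRev).coeff (n - k) =
      (-1 : K)^n * X.charpolyRev.coeff (n - k) := by
    rw [show ((-1 : K[X]))^n = Polynomial.C ((-1:K)^n) by simp, Polynomial.coeff_C_mul]
  rw [this, hrev, ← mul_assoc, ← mul_pow]
  simp
end

section
/- Let R be a commutative ring, n a natural number, and X an n×n matrix over R. Then for every k with 0 ≤ k ≤ n: det X * (charpoly (adjugate X)).coeff (n − k) = (−1)^n * (det X)^k * (charpoly X).coeff k. -/
open Polynomial Matrix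

private lemma coeff_comp_C_mul_X {R : Type*} [CommRing R] (p : R[X]) (a : R) (k : ℕ) :
    (p.comp (C a * X)).coeff k = a ^ k * p.coeff k := by
  induction p using Polynomial.induction_on' with
  | add p q hp hq => simp [add_comp, hp, hq, mul_add]
  | monomial m c =>
    rw [← C_mul_X_pow_eq_monomial, mul_comp, C_comp, X_pow_comp, mul_pow, ← C_pow,
      mul_left_comm, coeff_C_mul, coeff_C_mul, coeff_X_pow]
    by_cases h : k = m <;> simp [h, mul_comm, mul_left_comm]

theorem det_mul_charpoly_adjugate_coeff (R : Type*) [CommRing R] (n : ℕ)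
    (X : Matrix (Fin n) (Fin n) R) :
    ∀ k : ℕ, k ≤ n →
      X.det * (X.adjugate).charpoly.coeff (n - k)
        = (-1 : R) ^ n * X.det ^ k * X.charpoly.coeff k := by
  intro k hk
  nontriviality R
  have hN : (adjugate X).charpoly.natDegree = n := by
    simp [(adjugate X).charpoly_natDegree_eq_dim]
  have hrev : (adjugate X).charpoly.coeff (n - k) = (adjugate X).charpolyRev.coeff k := by
    rw [← reverse_charpoly, coeff_reverse, hN, revAt_le hk]
  have hdet : (C X.det : R[X]) = (X.map C).det := by
    rw [← RingHom.mapMatrix_apply, RingHom.map_det]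
  have hadj : X.adjugate.map (C : R →+* R[X]) = (X.map C).adjugate := by
    rw [← RingHom.mapMatrix_apply, ← RingHom.mapMatrix_apply, RingHom.map_adjugate]
  have hm : X.map C * (1 - (Polynomial.X : R[X]) • X.adjugate.map C)
      = X.map C - (C X.det * Polynomial.X) • (1 : Matrix (Fin n) (Fin n) R[X]) := by
    rw [mul_sub, mul_one, Matrix.mul_smul, hadj, mul_adjugate, ← hdet, smul_smul,
      mul_comm Polynomial.X (C X.det)]
  have hcomp : X.charpoly.comp (C X.det * Polynomial.X)
      = ((charmatrix X).map (eval₂RingHom C (C X.det * Polynomial.X))).det := by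
    conv_rhs => rw [← RingHom.mapMatrix_apply, ← RingHom.map_det]
    rfl
  have hmat : (charmatrix X).map ⇑(eval₂RingHom C (C X.det * Polynomial.X))
      = (C X.det * Polynomial.X) • (1 : Matrix (Fin n) (Fin n) R[X]) - X.map C := by
    ext i j
    by_cases h : i = j
    · subst h
      simp [charmatrix_apply_eq, Matrix.one_apply, Matrix.smul_apply]
    · simp [charmatrix_apply_ne _ _ _ h, Matrix.one_apply, h, Matrix.smul_apply]
  have key : C X.det * (adjugate X).charpolyRev
      = (-1 : R[X]) ^ n * (X.charpoly.comp (C X.det * Polynomial.X)) := by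
    calc C X.det * (adjugate X).charpolyRev
        = (X.map C).det * (1 - (Polynomial.X : R[X]) • X.adjugate.map C).det := by
          rw [charpolyRev, hdet]
      _ = (X.map C * (1 - (Polynomial.X : R[X]) • X.adjugate.map C)).det :=
          (Matrix.det_mul _ _).symm
      _ = (X.map C - (C X.det * Polynomial.X) • 1).det := by rw [hm]
      _ = (-1 : R[X]) ^ n * ((C X.det * Polynomial.X) • (1 : Matrix (Fin n) (Fin n) R[X])
            - X.map C).det := by
          rw [← neg_sub, Matrix.det_neg, Fintype.card_fin]
      _ = (-1 : R[X]) ^ n * (X.charpoly.comp (C X.det * Polynomial.X)) := by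
          rw [hcomp, hmat]
  have hc := congrArg (fun p : R[X] => p.coeff k) key
  simp only [coeff_C_mul] at hc
  rw [hrev, hc]
  rw [show ((-1 : R[X]) ^ n) = C ((-1 : R) ^ n) by rw [map_pow, C_neg, C_1],
    coeff_C_mul, coeff_comp_C_mul_X]
  ring
end

section
/- Let K be a field, n a natural number, and X an invertible n×n matrix over K. Then for every k with 1 ≤ k ≤ n: (charpoly (adjugate X)).coeff (n − k) = (−1)^n * (det X)^(k − 1) * (charpoly X).coeff k. -/
/-!
Over `R[t]`, `(1 - t • adj M) * M = M - t • det M • 1 = -(det M • t • 1 - M)`; taking determinants gives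
`det M * charpolyRev (adj M) = (-1)ⁿ * χ_M(det M • t)`, and comparing coefficients of `tᵏ` gives the
identity multiplied by `det M`. The factor can be cancelled for the generic matrix, whose determinant
is a nonzero polynomial over `ℤ`, and the identity then specializes to every matrix.
-/

open Polynomial

namespace Matrix

variable {n R : Type*} [Fintype n] [DecidableEq n] [CommRing R]

theorem charpoly_comp (M : Matrix n n R) (q : R[X]) :
    M.charpoly.comp q = (scalar n q - M.map C).det := by
  rw [Polynomial.comp, eval₂_eq_eval_map, ← charpoly_map, eval_charpoly]

theorem one_sub_X_smul_map_adjugate_mul_map (M : Matrix n n R) :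
    (1 - (X : R[X]) • M.adjugate.map C) * M.map C = -(scalar n (C M.det * X) - M.map C) := by
  rw [sub_mul, one_mul, smul_mul, ← Matrix.map_mul, adjugate_mul, neg_sub]
  congr 1
  ext i j
  by_cases h : i = j
  · subst h; simp
  · simp [h]

theorem C_det_mul_charpolyRev_adjugate (M : Matrix n n R) :
    C M.det * M.adjugate.charpolyRev
      = C ((-1) ^ Fintype.card n) * M.charpoly.comp (C M.det * X) :=
  calc C M.det * M.adjugate.charpolyRev
    _ = M.adjugate.charpolyRev * (M.map C).det := by
      rw [mul_comm, ← RingHom.mapMatrix_apply, ← RingHom.map_det]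
    _ = ((1 - (X : R[X]) • M.adjugate.map C) * M.map C).det := by
      rw [charpolyRev, det_mul]
    _ = C ((-1) ^ Fintype.card n) * M.charpoly.comp (C M.det * X) := by
      rw [one_sub_X_smul_map_adjugate_mul_map, det_neg, charpoly_comp, C_pow, C_neg, C_1]

theorem coeff_charpolyRev (M : Matrix n n R) {k : ℕ} (hk : k ≤ Fintype.card n) :
    M.charpolyRev.coeff k = M.charpoly.coeff (Fintype.card n - k) := by
  nontriviality R
  rw [← reverse_charpoly, coeff_reverse, charpoly_natDegree_eq_dim, revAt_le hk]

theorem det_mul_coeff_charpoly_adjugate (M : Matrix n n R) {k : ℕ} (hk : k ≤ Fintype.card n) :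
    M.det * M.adjugate.charpoly.coeff (Fintype.card n - k)
      = M.det ^ k * ((-1) ^ Fintype.card n * M.charpoly.coeff k) := by
  have h := congrArg (coeff · k) M.C_det_mul_charpolyRev_adjugate
  simp only [coeff_C_mul, comp_C_mul_X_coeff, coeff_charpolyRev _ hk] at h
  rw [h]
  ring

theorem coeff_charpoly_adjugate_of_isLeftRegular (M : Matrix n n R) (hM : IsLeftRegular M.det)
    {k : ℕ} (hk₁ : 1 ≤ k) (hk : k ≤ Fintype.card n) :
    M.adjugate.charpoly.coeff (Fintype.card n - k)
      = (-1) ^ Fintype.card n * M.det ^ (k - 1) * M.charpoly.coeff k := by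
  obtain ⟨j, rfl⟩ := Nat.exists_eq_add_of_le' hk₁
  apply hM
  dsimp only
  rw [det_mul_coeff_charpoly_adjugate M hk, Nat.add_sub_cancel, pow_succ']
  ring

theorem coeff_charpoly_adjugate (M : Matrix n n R) {k : ℕ} (hk₁ : 1 ≤ k) (hk : k ≤ Fintype.card n) :
    M.adjugate.charpoly.coeff (Fintype.card n - k)
      = (-1) ^ Fintype.card n * M.det ^ (k - 1) * M.charpoly.coeff k := by
  let f := MvPolynomial.eval₂Hom (Int.castRingHom R) fun p : n × n => M p.1 p.2
  have hfA : f.mapMatrix (mvPolynomialX n n ℤ) = M := mvPolynomialX_map_eval₂ _ M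
  have hA := (mvPolynomialX n n ℤ).coeff_charpoly_adjugate_of_isLeftRegular
    (IsRegular.of_ne_zero (det_mvPolynomialX_ne_zero n ℤ)).left hk₁ hk
  rw [← hfA, ← f.map_adjugate, ← f.map_det, RingHom.mapMatrix_apply, RingHom.mapMatrix_apply,
    charpoly_map, charpoly_map, coeff_map, coeff_map, hA]
  simp only [map_mul, map_pow, map_neg, map_one]

end Matrix

theorem charpoly_adjugate_coeff_general (K : Type*) [Field K] (n : ℕ)
    (X : Matrix (Fin n) (Fin n) K) :
    ∀ k : ℕ, 1 ≤ k → k ≤ n →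
      (X.adjugate).charpoly.coeff (n - k)
        = (-1 : K) ^ n * X.det ^ (k - 1) * X.charpoly.coeff k := by
  intro k hk₁ hk
  simpa only [Fintype.card_fin] using X.coeff_charpoly_adjugate hk₁ (by rwa [Fintype.card_fin])

theorem charpoly_adjugate_coeff (K : Type*) [Field K] (n : ℕ)
    (X : Matrix (Fin n) (Fin n) K) (hX : IsUnit X) :
    ∀ k : ℕ, 1 ≤ k → k ≤ n →
      (X.adjugate).charpoly.coeff (n - k)
        = (-1 : K) ^ n * X.det ^ (k - 1) * X.charpoly.coeff k :=
  charpoly_adjugate_coeff_general K n X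
end
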